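/- arXiv:2310.13082 — 2 statements merged into one kernel-verified Lean document; each statement's English description precedes it below -/
import Mathlib

section
/- Let G' be a digraph on n vertices such that every vertex set S with βn/5 ≤ |S| ≤ n/2 satisfies |Out_{G'}(S)| ≥ βn/150, where 0 < β ≤ 1. Then for every vertex set A with |A| ≥ βn/5, the set of vertices reachable from A in G' within ⌈150/β⌉ steps has size greater than n/2. -/
open Finset

/-- Vertices reachable from `A` within `k` steps in the digraph with edge set `E`. -/
def reachWithin {V : Type*} [Fintype V] [DecidableEq V]
    (E : Finset (V × V)) (A : Finset V) : ℕ → Finset V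
  | 0 => A
  | k + 1 => reachWithin E A k ∪
      Finset.univ.filter (fun v => ∃ u ∈ reachWithin E A k, (u, v) ∈ E)

lemma reachWithin_subset_succ {V : Type*} [Fintype V] [DecidableEq V]
    (E : Finset (V × V)) (A : Finset V) (k : ℕ) :
    reachWithin E A k ⊆ reachWithin E A (k + 1) := by
  simp [reachWithin]

/-- If every `S` with `βn/5 ≤ |S| ≤ n/2` has out-neighbourhood of size at least
`βn/150`, then from any `A` with `|A| ≥ βn/5` more than `n/2` vertices are
reachable within `⌈150/β⌉` steps. -/
theorem reach_many_vertices {V : Type*} [Fintype V] [DecidableEq V]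
    (E : Finset (V × V)) (n : ℕ) (hn : Fintype.card V = n) (hn0 : 0 < n)
    (β : ℝ) (hβ0 : 0 < β) (hβ1 : β ≤ 1)
    (hexp : ∀ S : Finset V, β * n / 5 ≤ (S.card : ℝ) → (S.card : ℝ) ≤ n / 2 →
      β * n / 150 ≤
        ((Finset.univ.filter (fun v => v ∉ S ∧ ∃ u ∈ S, (u, v) ∈ E)).card : ℝ))
    (A : Finset V) (hA : β * n / 5 ≤ (A.card : ℝ)) :
    (n : ℝ) / 2 < ((reachWithin E A ⌈(150 : ℝ) / β⌉₊).card : ℝ) := by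
  have hβn : (0:ℝ) ≤ β * n / 150 := by positivity
  have key : ∀ k : ℕ, (n : ℝ) / 2 < ((reachWithin E A k).card : ℝ) ∨
      β * n / 5 + k * (β * n / 150) ≤ ((reachWithin E A k).card : ℝ) := by
    intro k
    induction k with
    | zero => right; simpa [reachWithin] using hA
    | succ k ih =>
      have hsub := reachWithin_subset_succ E A k
      have hmono : ((reachWithin E A k).card : ℝ) ≤ ((reachWithin E A (k+1)).card : ℝ) := by
        exact_mod_cast Finset.card_le_card hsub
      rcases ih with h | h
      · left; linarith
      · by_cases hhalf : (n : ℝ) / 2 < ((reachWithin E A k).card : ℝ)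
        · left; linarith
        · push_neg at hhalf
          set S := reachWithin E A k with hS
          have hlow : β * n / 5 ≤ (S.card : ℝ) := by
            have : (0:ℝ) ≤ (k:ℝ) * (β * n / 150) := by positivity
            linarith
          have hout := hexp S hlow hhalf
          set O := Finset.univ.filter (fun v => v ∉ S ∧ ∃ u ∈ S, (u, v) ∈ E) with hO
          have hdisj : Disjoint S O := by
            rw [Finset.disjoint_left]
            intro a haS haO
            rw [hO, Finset.mem_filter] at haO
            exact haO.2.1 haS
          have hsub2 : S ∪ O ⊆ reachWithin E A (k+1) := by
            rw [show reachWithin E A (k+1) = S ∪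
              Finset.univ.filter (fun v => ∃ u ∈ S, (u, v) ∈ E) from rfl]
            apply Finset.union_subset_union_right
            intro v hv
            rw [hO, Finset.mem_filter] at hv
            exact Finset.mem_filter.2 ⟨Finset.mem_univ v, hv.2.2⟩
          have hcard : S.card + O.card ≤ (reachWithin E A (k+1)).card := by
            rw [← Finset.card_union_of_disjoint hdisj]
            exact Finset.card_le_card hsub2
          have hcard' : (S.card : ℝ) + (O.card : ℝ) ≤ ((reachWithin E A (k+1)).card : ℝ) := by
            exact_mod_cast hcard
          right
          push_cast
          linarith
  set K := ⌈(150 : ℝ) / β⌉₊ with hK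
  rcases key K with h | h
  · exact h
  · have hKle : (150 : ℝ) / β ≤ (K : ℝ) := Nat.le_ceil _
    have h1 : (n : ℝ) ≤ (K : ℝ) * (β * n / 150) := by
      have : (150 : ℝ) / β * (β * n / 150) = n := by
        field_simp
      calc (n : ℝ) = (150 : ℝ) / β * (β * n / 150) := this.symm
        _ ≤ (K : ℝ) * (β * n / 150) := by
            apply mul_le_mul_of_nonneg_right hKle hβn
    have h2 : (0:ℝ) ≤ β * n / 5 := by positivity
    have hn2 : (n:ℝ)/2 < n := by
      have : (0:ℝ) < n := by exact_mod_cast hn0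
      linarith
    linarith
end

section
/- Let T be a rooted tree (viewed as a digraph with edges directed away from the root) of depth ℓ, contained in a digraph G on n vertices satisfying e_G(S) ≤ 2γd|S| for every S with |S| ≤ βn, where γ < 1/300. Suppose |V(T)| ≤ βn and every vertex of T at depth less than ℓ − 1 has at least d/50 children. Then ℓ ≤ log₂ n, i.e., each level of T has size at least twice the union of all previous levels, so every vertex of T is at distance at most log₂ n + 1 from the root. -/
open Finset

private lemma two_pow_le_three_pow_succ (m : ℕ) : 2 ^ (m + 1) ≤ 3 ^ m + 1 := by
  induction m with
  | zero => norm_num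
  | succ m ih =>
      have h1 : (1:ℕ) ≤ 3 ^ m := Nat.one_le_pow _ _ (by norm_num)
      calc 2 ^ (m + 2) = 2 * 2 ^ (m + 1) := by ring
        _ ≤ 2 * (3 ^ m + 1) := by omega
        _ ≤ 3 ^ (m + 1) + 1 := by rw [pow_succ]; omega

/-- A rooted out-directed tree `T ⊆ G` of depth `ℓ` on at most `βn` vertices,
inside a digraph `G` with `e_G(S) ≤ 2γd|S|` for all `|S| ≤ βn` where `γ < 1/300`,
in which every vertex of depth less than `ℓ − 1` has at least `d/50` children,
has depth `ℓ ≤ log₂ n`. Here `S i` is the set of vertices of `T` at depth `i`. -/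
theorem tree_depth_log {V : Type*} [Fintype V] [DecidableEq V]
    (G : Finset (V × V)) (n : ℕ) (hn : Fintype.card V = n)
    (d β γ : ℝ) (hd : 0 < d) (hγ : γ < 1 / 300)
    (hsparse : ∀ S : Finset V, (S.card : ℝ) ≤ β * n →
      ((G.filter (fun e => e.1 ∈ S ∧ e.2 ∈ S)).card : ℝ) ≤ 2 * γ * d * S.card)
    (T : Finset (V × V)) (hTG : T ⊆ G)
    (ℓ : ℕ) (r : V) (S : ℕ → Finset V)
    (hroot : S 0 = {r})
    (hdisj : ∀ i j, i ≠ j → Disjoint (S i) (S j))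
    (hlevels : ∀ e ∈ T, ∃ i, i < ℓ ∧ e.1 ∈ S i ∧ e.2 ∈ S (i + 1))
    (hnonempty : ∀ i, i ≤ ℓ → (S i).Nonempty)
    (hsize : ((((Finset.range (ℓ + 1)).biUnion S).card : ℝ)) ≤ β * n)
    (hchildren : ∀ i, i + 1 < ℓ → ∀ v ∈ S i,
      d / 50 ≤ ((T.filter (fun e => e.1 = v ∧ e.2 ∈ S (i + 1))).card : ℝ)) :
    (ℓ : ℝ) ≤ Real.logb 2 n := by
  classical
  set U : ℕ → Finset V := fun i => (Finset.range (i + 1)).biUnion S with hU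
  -- basic facts
  have hn1 : 1 ≤ n := by
    obtain ⟨v, hv⟩ := hnonempty 0 (Nat.zero_le _)
    rw [← hn]
    exact Fintype.card_pos_iff.mpr ⟨v⟩
  have hrU : ∀ i, r ∈ U i := by
    intro i
    rw [hU]
    exact Finset.mem_biUnion.mpr ⟨0, Finset.mem_range.mpr (by omega),
      by rw [hroot]; exact Finset.mem_singleton_self r⟩
  have hUsucc : ∀ j : ℕ, U (j + 1) = S (j + 1) ∪ U j := by
    intro j
    simp [hU, Finset.range_add_one, Finset.biUnion_insert]
  have hdisjU : ∀ j : ℕ, Disjoint (S (j + 1)) (U j) := by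
    intro j
    rw [hU, Finset.disjoint_biUnion_right]
    intro k hk
    exact hdisj (j + 1) k (by simp only [Finset.mem_range] at hk; omega)
  have hcardU : ∀ j : ℕ, (U (j + 1)).card = (S (j + 1)).card + (U j).card := by
    intro j
    rw [hUsucc j, Finset.card_union_of_disjoint (hdisjU j)]
  -- key doubling claim
  have key : ∀ i, i + 1 < ℓ → 2 * (U i).card ≤ (S (i + 1)).card := by
    intro i hi
    by_contra hcon
    push_neg at hcon
    have hWsub : U (i + 1) ⊆ (Finset.range (ℓ + 1)).biUnion S := by
      apply Finset.biUnion_subset_biUnion_of_subset_left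
      apply Finset.range_subset_range.mpr; omega
    have hWβ : ((U (i + 1)).card : ℝ) ≤ β * n :=
      le_trans (by exact_mod_cast Finset.card_le_card hWsub) hsize
    have hF := hsparse (U (i + 1)) hWβ
    set F := G.filter (fun e => e.1 ∈ U (i + 1) ∧ e.2 ∈ U (i + 1)) with hFdef
    -- lower bound on F via children
    set Q : Finset (Σ _ : ℕ, V) := (Finset.range (i + 1)).sigma S with hQ
    set Ef : (Σ _ : ℕ, V) → Finset (V × V) :=
      fun p => T.filter (fun e => e.1 = p.2 ∧ e.2 ∈ S (p.1 + 1)) with hEf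
    have hdisjE : ∀ p ∈ Q, ∀ q ∈ Q, p ≠ q → Disjoint (Ef p) (Ef q) := by
      intro p hp q hq hpq
      rw [Finset.disjoint_left]
      intro e he he'
      simp only [hEf, Finset.mem_filter] at he he'
      apply hpq
      have hv : p.2 = q.2 := by rw [← he.2.1, ← he'.2.1]
      simp only [hQ, Finset.mem_sigma] at hp hq
      have hj : p.1 = q.1 := by
        by_contra hne
        have := hdisj p.1 q.1 hne
        rw [Finset.disjoint_left] at this
        exact this hp.2 (hv ▸ hq.2)
      exact Sigma.ext hj (heq_of_eq (by rw [hv]))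
    have hsubF : Q.biUnion Ef ⊆ F := by
      intro e he
      rw [Finset.mem_biUnion] at he
      obtain ⟨p, hp, hep⟩ := he
      simp only [hEf, Finset.mem_filter] at hep
      simp only [hQ, Finset.mem_sigma, Finset.mem_range] at hp
      rw [hFdef, Finset.mem_filter]
      refine ⟨hTG hep.1, ?_, ?_⟩
      · rw [hU]
        exact Finset.mem_biUnion.mpr ⟨p.1, Finset.mem_range.mpr (by omega), hep.2.1 ▸ hp.2⟩
      · rw [hU]
        exact Finset.mem_biUnion.mpr ⟨p.1 + 1, Finset.mem_range.mpr (by omega), hep.2.2⟩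
    have hQcard : Q.card = (U i).card := by
      rw [hQ, Finset.card_sigma, hU,
        Finset.card_biUnion (fun a _ b _ hab => hdisj a b hab)]
    have hterm : ∀ p ∈ Q, d / 50 ≤ ((Ef p).card : ℝ) := by
      intro p hp
      simp only [hQ, Finset.mem_sigma, Finset.mem_range] at hp
      exact hchildren p.1 (by omega) p.2 hp.2
    have hlow : ((U i).card : ℝ) * (d / 50) ≤ (F.card : ℝ) := by
      calc ((U i).card : ℝ) * (d / 50) = Q.card • (d / 50) := by
            rw [nsmul_eq_mul, hQcard]
        _ ≤ ∑ p ∈ Q, ((Ef p).card : ℝ) := Finset.card_nsmul_le_sum Q _ _ hterm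
        _ = ((Q.biUnion Ef).card : ℝ) := by
            rw [Finset.card_biUnion hdisjE]; push_cast; ring
        _ ≤ (F.card : ℝ) := by exact_mod_cast Finset.card_le_card hsubF
    -- derive contradiction
    have hu1 : (1 : ℝ) ≤ ((U i).card : ℝ) := by
      have : 0 < (U i).card := Finset.card_pos.mpr ⟨r, hrU i⟩
      exact_mod_cast this
    have hw : ((U (i + 1)).card : ℝ) = ((S (i + 1)).card : ℝ) + ((U i).card : ℝ) := by
      rw [hcardU i]; push_cast; ring
    have hs : ((S (i + 1)).card : ℝ) ≤ 2 * ((U i).card : ℝ) - 1 := by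
      have : (S (i + 1)).card + 1 ≤ 2 * (U i).card := hcon
      have := (Nat.cast_le (α := ℝ)).mpr this
      push_cast at this
      linarith
    have hF0 : (0 : ℝ) ≤ (F.card : ℝ) := Nat.cast_nonneg _
    set u : ℝ := ((U i).card : ℝ)
    set w : ℝ := ((U (i + 1)).card : ℝ)
    rcases le_or_gt γ 0 with hγ0 | hγ0
    · have hwnn : (0 : ℝ) ≤ w := Nat.cast_nonneg _
      have h1 : 2 * γ * d * w ≤ 0 := by nlinarith [mul_nonneg hd.le hwnn]
      nlinarith [mul_le_mul_of_nonneg_right hu1 (by positivity : (0:ℝ) ≤ d / 50)]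
    · have hγd : (0 : ℝ) < 2 * γ * d := by positivity
      have hw3 : w ≤ 3 * u - 1 := by linarith
      have h1 : (F.card : ℝ) ≤ 2 * γ * d * (3 * u - 1) :=
        hF.trans (by nlinarith)
      have h2 : 2 * γ * d * (3 * u - 1) < d * u / 50 := by
        nlinarith [mul_pos hd (show (0:ℝ) < 3 * u - 1 by linarith),
          mul_pos (show (0:ℝ) < 1 / 300 - γ by linarith)
            (mul_pos hd (show (0:ℝ) < 3 * u - 1 by linarith))]
      linarith
  -- growth
  rcases Nat.eq_zero_or_pos ℓ with hℓ0 | hℓpos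
  · rw [hℓ0]
    push_cast
    exact Real.logb_nonneg (by norm_num) (by exact_mod_cast hn1)
  obtain ⟨m, rfl⟩ : ∃ m, ℓ = m + 1 := ⟨ℓ - 1, by omega⟩
  have grow : ∀ i, i ≤ m → 3 ^ i ≤ (U i).card := by
    intro i hi
    induction i with
    | zero =>
        simp [hU, hroot]
    | succ j ih =>
        have hj : j ≤ m := by omega
        have h3 : 3 ^ j ≤ (U j).card := ih hj
        have hk := key j (by omega)
        rw [hcardU j, pow_succ]
        omega
  have hfinal : 2 ^ (m + 1) ≤ (U (m + 1)).card := by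
    have h1 : 3 ^ m ≤ (U m).card := grow m le_rfl
    have h2 : 1 ≤ (S (m + 1)).card := Finset.card_pos.mpr (hnonempty (m + 1) le_rfl)
    have := hcardU m
    have := two_pow_le_three_pow_succ m
    omega
  have hUn : (U (m + 1)).card ≤ n := by
    rw [← hn]
    exact Finset.card_le_univ _
  have h2n : (2 : ℕ) ^ (m + 1) ≤ n := le_trans hfinal hUn
  have h2nr : (2 : ℝ) ^ ((m + 1 : ℕ) : ℝ) ≤ (n : ℝ) := by
    rw [Real.rpow_natCast]
    exact_mod_cast h2n
  calc ((m + 1 : ℕ) : ℝ) = Real.logb 2 ((2 : ℝ) ^ ((m + 1 : ℕ) : ℝ)) := by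
        rw [Real.logb_rpow (by norm_num) (by norm_num)]
    _ ≤ Real.logb 2 (n : ℝ) := by
        apply Real.logb_le_logb_of_le (by norm_num) (by positivity) h2nr
end
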